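/- Let L ≥ 1 be an integer and for l = 0, …, L−1 define the evenly spaced unit directions c_l = (cos(2πl/L), sin(2πl/L)) in ℝ² with the standard inner product. Then for every z ∈ ℝ² there exists an index l with ⟨c_l, z⟩ ≥ ‖z‖·cos(π/L). -/

import Mathlib

/-!
In polar form `z = ‖z‖ (cos θ, sin θ)`, the projection of `z` on the direction of angle `α`
is `‖z‖ cos (α - θ)`. The angles `2πn/L`, `n : ℤ`, are `2π/L` apart, so one of them lies
within `π/L` of `θ`, and `cos` is decreasing on `[0, π]`.
-/

open Real RealInnerProductSpace

/-- The `l`-th of `L` evenly spaced unit directions in the plane. -/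
noncomputable def evenDir (L l : ℕ) : EuclideanSpace ℝ (Fin 2) :=
  (WithLp.equiv 2 (Fin 2 → ℝ)).symm
    ![Real.cos (2 * π * l / L), Real.sin (2 * π * l / L)]

noncomputable def planeDir (α : ℝ) : EuclideanSpace ℝ (Fin 2) :=
  (WithLp.equiv 2 (Fin 2 → ℝ)).symm ![Real.cos α, Real.sin α]

lemma planeDir_add_int_mul_two_pi (α : ℝ) (k : ℤ) :
    planeDir (α + k * (2 * π)) = planeDir α := by
  simp only [planeDir, Real.cos_add_int_mul_two_pi, Real.sin_add_int_mul_two_pi]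

lemma exists_polar (z : EuclideanSpace ℝ (Fin 2)) :
    ∃ θ : ℝ, z 0 = ‖z‖ * Real.cos θ ∧ z 1 = ‖z‖ * Real.sin θ := by
  set w := Complex.orthonormalBasisOneI.repr.symm z
  have hnorm : ‖w‖ = ‖z‖ := LinearIsometryEquiv.norm_map _ z
  refine ⟨Complex.arg w, ?_, ?_⟩
  · rw [← hnorm, Complex.norm_mul_cos_arg]; simp [w]
  · rw [← hnorm, Complex.norm_mul_sin_arg]; simp [w]

lemma exists_inner_planeDir_eq_norm_mul_cos (z : EuclideanSpace ℝ (Fin 2)) :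
    ∃ θ : ℝ, ∀ α, ⟪planeDir α, z⟫ = ‖z‖ * Real.cos (α - θ) := by
  obtain ⟨θ, h0, h1⟩ := exists_polar z
  refine ⟨θ, fun α => ?_⟩
  simp only [planeDir, PiLp.inner_apply, RCLike.inner_apply, conj_trivial, Fin.sum_univ_two]
  simp only [WithLp.equiv_symm_apply, Matrix.cons_val_zero, Matrix.cons_val_one, h0, h1,
    Real.cos_sub]
  ring

lemma exists_int_abs_mul_sub_le (θ : ℝ) {h : ℝ} (hh : 0 < h) :
    ∃ n : ℤ, |n * h - θ| ≤ h / 2 := by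
  refine ⟨round (θ / h), ?_⟩
  calc |round (θ / h) * h - θ| = |θ / h - round (θ / h)| * h := by
        rw [← abs_of_pos hh, ← abs_mul, abs_of_pos hh, abs_sub_comm]
        congr 1; field_simp
    _ ≤ 1 / 2 * h := by gcongr; exact abs_sub_round _
    _ = h / 2 := by ring

lemma evenDir_toNat_emod (L : ℕ) (hL : 0 < L) (n : ℤ) :
    evenDir L (n % L).toNat = planeDir (2 * π * n / L) := by
  have hcast : (((n % L).toNat : ℕ) : ℝ) = n - L * (n / L : ℤ) := by
    rw [← Int.cast_natCast, Int.toNat_of_nonneg (Int.emod_nonneg n (by omega)), Int.emod_def]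
    push_cast; ring
  have hL' : (L : ℝ) ≠ 0 := by positivity
  rw [evenDir, ← planeDir, hcast, ← planeDir_add_int_mul_two_pi _ (n / L)]
  congr 1
  field_simp
  ring

/-- Quantitative completeness of direction sampling: among `L` evenly spaced
directions, some direction has projection of `z` at least `‖z‖ · cos (π/L)`. -/
theorem stmt_4 (L : ℕ) (hL : 1 ≤ L) (z : EuclideanSpace ℝ (Fin 2)) :
    ∃ l < L, ‖z‖ * Real.cos (π / L) ≤ ⟪evenDir L l, z⟫ := by
  have hLpos : (0 : ℝ) < L := by exact_mod_cast hL
  obtain ⟨θ, hinner⟩ := exists_inner_planeDir_eq_norm_mul_cos z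
  obtain ⟨n, hn⟩ := exists_int_abs_mul_sub_le θ (by positivity : 0 < 2 * π / L)
  have hangle : |2 * π * n / L - θ| ≤ π / L := by
    rwa [show n * (2 * π / L) = 2 * π * n / L by ring, show 2 * π / L / 2 = π / L by ring] at hn
  refine ⟨(n % L).toNat, ?_, ?_⟩
  · have := Int.emod_lt_of_pos n (by omega : (0 : ℤ) < L)
    omega
  · rw [evenDir_toNat_emod L hL n, hinner, ← Real.cos_abs (2 * π * n / L - θ)]
    gcongr
    exact Real.cos_le_cos_of_nonneg_of_le_pi (abs_nonneg _)
      (div_le_self pi_pos.le (by exact_mod_cast hL)) hangle
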